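/- Let G₃ = ⟨g₁, g₂, g₃ ∣ g₂g₁ = g₁^{-1}g₂, g₃g₁ = g₁g₃, g₃g₂ = g₂^{-1}g₃⟩. A map ψ : G₃ → G₃ is an automorphism if and only if there exist a, b ∈ ℤ and ε₁, ε₂, ε₃ ∈ {1, -1} such that ψ(g₁) = g₁^{ε₁}, ψ(g₂) = g₁^{a} g₂^{ε₂}, and ψ(g₃) = g₂^{2b} g₃^{ε₃}. -/

import Mathlib

/-- The relators `g₂g₁g₂⁻¹g₁`, `g₃g₁g₃⁻¹g₁⁻¹`, `g₃g₂g₃⁻¹g₂` presenting the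
group `⟨g₁, g₂, g₃ ∣ g₂g₁ = g₁⁻¹g₂, g₃g₁ = g₁g₃, g₃g₂ = g₂⁻¹g₃⟩`. -/
def polyZRelsA0 : Set (FreeGroup (Fin 3)) :=
  {FreeGroup.of 1 * FreeGroup.of 0 * (FreeGroup.of 1)⁻¹ * FreeGroup.of 0,
   FreeGroup.of 2 * FreeGroup.of 0 * (FreeGroup.of 2)⁻¹ * (FreeGroup.of 0)⁻¹,
   FreeGroup.of 2 * FreeGroup.of 1 * (FreeGroup.of 2)⁻¹ * FreeGroup.of 1}

/-!
Writing elements of `G₃` in the normal form `g₁^x g₂^y g₃^z` identifies `G₃` with `ℤ³` under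
`(x, y, z)(x', y', z') = (x + (-1)^y x', y + (-1)^z y', z + z')`. For an endomorphism `θ` of
this group the relations force `θ(g₁) = (p, 0, 0)` and `θ(g₂) = (s, t, 0)`; writing
`θ(g₃) = (c, d, f)`, `θ` is then triangular, `θ(x, y, z) = (p x + A(y, z), t y + B(z), f z)`,
so it is bijective exactly when `p, t, f = ±1`. Given that, `g₃g₁ = g₁g₃` forces `d` even and
`g₃g₂ = g₂⁻¹g₃` forces `c = 0`.
-/

open Function

lemma Int.negOnePow_units_mul (u : ℤˣ) (n : ℤ) : (u * n : ℤ).negOnePow = n.negOnePow := by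
  rcases Int.units_eq_one_or u with rfl | rfl <;> simp

lemma zpow_one_eq_of_map_add {G : Type*} [Group G] {f : ℤ → G}
    (hf : ∀ m n, f (m + n) = f m * f n) (n : ℤ) : f 1 ^ n = f n := by
  induction n using Int.induction_on with
  | zero => rw [zpow_zero, eq_comm]; simpa using hf 0 0
  | succ k ih => rw [zpow_add_one, ih, hf]
  | pred k ih => rw [zpow_sub_one, ih, mul_inv_eq_iff_eq_mul, ← hf, sub_add_cancel]

lemma SemiconjBy.zpow_zpow_of_inv {G : Type*} [Group G] {a b : G} (h : SemiconjBy a b b⁻¹)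
    (n m : ℤ) : SemiconjBy (a ^ n) (b ^ m) (b ^ (n.negOnePow * m : ℤ)) := by
  have step (m : ℤ) : SemiconjBy a (b ^ m) (b ^ (-m)) := by
    simpa [zpow_neg] using h.zpow_right m
  induction n using Int.induction_on generalizing m with
  | zero => simp
  | succ k ih =>
    rw [zpow_add_one, Int.negOnePow_succ, Units.val_neg, neg_mul, ← mul_neg]
    exact (ih (-m)).mul_left (step m)
  | pred k ih =>
    rw [zpow_sub_one, Int.negOnePow_sub, Int.negOnePow_one, mul_neg_one, Units.val_neg, neg_mul,
      ← mul_neg]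
    refine (ih (-m)).mul_left ?_
    simpa using step (-m)

namespace PolyZA0

@[ext] structure Model where
  x : ℤ
  y : ℤ
  z : ℤ

namespace Model

instance : Mul Model :=
  ⟨fun u v => ⟨u.x + u.y.negOnePow * v.x, u.y + u.z.negOnePow * v.y, u.z + v.z⟩⟩
instance : One Model := ⟨⟨0, 0, 0⟩⟩
instance : Inv Model := ⟨fun v => ⟨-(v.y.negOnePow * v.x), -(v.z.negOnePow * v.y), -v.z⟩⟩

@[simp] lemma mul_x (u v : Model) : (u * v).x = u.x + u.y.negOnePow * v.x := rfl
@[simp] lemma mul_y (u v : Model) : (u * v).y = u.y + u.z.negOnePow * v.y := rfl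
@[simp] lemma mul_z (u v : Model) : (u * v).z = u.z + v.z := rfl
@[simp] lemma inv_x (v : Model) : v⁻¹.x = -(v.y.negOnePow * v.x) := rfl
@[simp] lemma inv_y (v : Model) : v⁻¹.y = -(v.z.negOnePow * v.y) := rfl
@[simp] lemma inv_z (v : Model) : v⁻¹.z = -v.z := rfl
@[simp] lemma one_x : (1 : Model).x = 0 := rfl
@[simp] lemma one_y : (1 : Model).y = 0 := rfl
@[simp] lemma one_z : (1 : Model).z = 0 := rfl

instance : Group Model where
  mul_assoc u v w := by
    ext <;> simp only [mul_x, mul_y, mul_z, Int.negOnePow_add, Int.negOnePow_units_mul,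
      Units.val_mul] <;> ring
  one_mul v := by ext <;> simp
  mul_one v := by ext <;> simp
  inv_mul_cancel v := by
    ext <;> simp only [mul_x, mul_y, mul_z, inv_x, inv_y, inv_z, one_x, one_y, one_z,
      Int.negOnePow_neg, Int.negOnePow_units_mul] <;> ring

lemma zpow_z (v : Model) (n : ℤ) : (v ^ n).z = n * v.z := by
  induction n using Int.induction_on with
  | zero => simp
  | succ k ih => simp only [zpow_add_one, mul_z, ih]; ring
  | pred k ih => simp only [zpow_sub_one, mul_z, inv_z, ih]; ring

lemma zpow_y_of_z_eq_zero {v : Model} (hv : v.z = 0) (n : ℤ) : (v ^ n).y = n * v.y := by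
  induction n using Int.induction_on with
  | zero => simp
  | succ k ih =>
    simp only [zpow_add_one, mul_y, ih, zpow_z, hv, mul_zero, Int.negOnePow_zero, Units.val_one]
    ring
  | pred k ih =>
    simp only [zpow_sub_one, mul_y, inv_y, ih, zpow_z, hv, mul_zero, Int.negOnePow_zero,
      Units.val_one]
    ring

lemma mk_zero_zero_zpow (p n : ℤ) : (⟨p, 0, 0⟩ : Model) ^ n = ⟨n * p, 0, 0⟩ := by
  simpa using zpow_one_eq_of_map_add (f := fun n : ℤ => (⟨n * p, 0, 0⟩ : Model))
    (fun m n => by ext <;> simp; ring) n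

lemma zpow_mul_zpow_mul_zpow (x y z : ℤ) :
    (⟨1, 0, 0⟩ : Model) ^ x * (⟨0, 1, 0⟩ : Model) ^ y * (⟨0, 0, 1⟩ : Model) ^ z = ⟨x, y, z⟩ := by
  have hy : (⟨0, 1, 0⟩ : Model) ^ y = ⟨0, y, 0⟩ :=
    zpow_one_eq_of_map_add (f := fun n : ℤ => (⟨0, n, 0⟩ : Model)) (fun m n => by ext <;> simp) y
  have hz : (⟨0, 0, 1⟩ : Model) ^ z = ⟨0, 0, z⟩ :=
    zpow_one_eq_of_map_add (f := fun n : ℤ => (⟨0, 0, n⟩ : Model)) (fun m n => by ext <;> simp) z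
  have hx : (⟨1, 0, 0⟩ : Model) ^ x = ⟨x, 0, 0⟩ := by simpa using mk_zero_zero_zpow 1 x
  rw [hx, hy, hz]
  ext <;> simp

lemma map_eq_zpow_mul_zpow_mul_zpow {G : Type*} [Group G] (θ : Model →* G) (v : Model) :
    θ v = θ ⟨1, 0, 0⟩ ^ v.x * θ ⟨0, 1, 0⟩ ^ v.y * θ ⟨0, 0, 1⟩ ^ v.z := by
  rw [← map_zpow, ← map_zpow, ← map_zpow, ← map_mul, ← map_mul, zpow_mul_zpow_mul_zpow]

lemma semiconjBy_gen₂_gen₁ : SemiconjBy (⟨0, 1, 0⟩ : Model) ⟨1, 0, 0⟩ (⟨1, 0, 0⟩ : Model)⁻¹ := by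
  ext <;> simp

lemma commute_gen₃_gen₁ : Commute (⟨0, 0, 1⟩ : Model) ⟨1, 0, 0⟩ := by
  ext <;> simp

lemma semiconjBy_gen₃_gen₂ : SemiconjBy (⟨0, 0, 1⟩ : Model) ⟨0, 1, 0⟩ (⟨0, 1, 0⟩ : Model)⁻¹ := by
  ext <;> simp

theorem bijective_iff_of_triangular {F : Model → Model} {p t f : ℤ} {A : ℤ → ℤ → ℤ}
    {B : ℤ → ℤ} (hA : A 0 0 = 0) (hB : B 0 = 0)
    (hF : ∀ v, F v = ⟨p * v.x + A v.y v.z, t * v.y + B v.z, f * v.z⟩) :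
    Bijective F ↔ IsUnit p ∧ IsUnit t ∧ IsUnit f := by
  constructor
  · intro hbij
    obtain ⟨u, hu⟩ := hbij.2 ⟨0, 0, 1⟩
    obtain ⟨v, hv⟩ := hbij.2 ⟨0, 1, 0⟩
    obtain ⟨w, hw⟩ := hbij.2 ⟨1, 0, 0⟩
    simp only [hF, Model.mk.injEq] at hu hv hw
    have hf : IsUnit f := .of_mul_eq_one _ hu.2.2
    have hvz : v.z = 0 := by simpa [hf.ne_zero] using hv.2.2
    have hwz : w.z = 0 := by simpa [hf.ne_zero] using hw.2.2
    have ht : IsUnit t := .of_mul_eq_one v.y (by simpa [hvz, hB] using hv.2.1)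
    have hwy : w.y = 0 := by simpa [hwz, hB, ht.ne_zero] using hw.2.1
    exact ⟨.of_mul_eq_one w.x (by simpa [hwy, hwz, hA] using hw.1), ht, hf⟩
  · rintro ⟨hp, ht, hf⟩
    refine ⟨fun v w hvw => ?_, fun w => ?_⟩
    · simp only [hF, Model.mk.injEq] at hvw
      have hz : v.z = w.z := mul_left_cancel₀ hf.ne_zero hvw.2.2
      have hy : v.y = w.y := mul_left_cancel₀ ht.ne_zero (by simpa [hz] using hvw.2.1)
      have hx : v.x = w.x := mul_left_cancel₀ hp.ne_zero (by simpa [hy, hz] using hvw.1)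
      exact Model.ext hx hy hz
    · set z := f * w.z
      set y := t * (w.y - B z)
      refine ⟨⟨p * (w.x - A y z), y, z⟩, ?_⟩
      simp only [hF, ← mul_assoc, Int.isUnit_mul_self hp, Int.isUnit_mul_self ht,
        Int.isUnit_mul_self hf, y, z]
      ext <;> simp

theorem bijective_iff_isUnit_of_map (θ : Model →* Model) {p s t c d f : ℤ}
    (h₁ : θ ⟨1, 0, 0⟩ = ⟨p, 0, 0⟩) (h₂ : θ ⟨0, 1, 0⟩ = ⟨s, t, 0⟩)
    (h₃ : θ ⟨0, 0, 1⟩ = ⟨c, d, f⟩) :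
    Bijective θ ↔ IsUnit p ∧ IsUnit t ∧ IsUnit f := by
  refine bijective_iff_of_triangular
    (A := fun y z => ((⟨s, t, 0⟩ : Model) ^ y * (⟨c, d, f⟩ : Model) ^ z).x)
    (B := fun z => ((⟨c, d, f⟩ : Model) ^ z).y) (by simp) (by simp) fun v => ?_
  rw [map_eq_zpow_mul_zpow_mul_zpow, h₁, h₂, h₃, mk_zero_zero_zpow, mul_assoc]
  ext <;> simp [zpow_z, zpow_y_of_z_eq_zero, mul_comm]

theorem exists_map_gens_eq (θ : Model →* Model) : ∃ p s t c d f : ℤ,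
    θ ⟨1, 0, 0⟩ = ⟨p, 0, 0⟩ ∧ θ ⟨0, 1, 0⟩ = ⟨s, t, 0⟩ ∧ θ ⟨0, 0, 1⟩ = ⟨c, d, f⟩ := by
  have r₁ := semiconjBy_gen₂_gen₁.map θ
  have r₃ := semiconjBy_gen₃_gen₂.map θ
  simp only [SemiconjBy, map_inv, Model.ext_iff, mul_x, mul_y, mul_z, inv_x, inv_y, inv_z] at r₁ r₃
  have h₁z : (θ ⟨1, 0, 0⟩).z = 0 := by linarith [r₁.2.2]
  have h₂z : (θ ⟨0, 1, 0⟩).z = 0 := by linarith [r₃.2.2]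
  have h₁y : (θ ⟨1, 0, 0⟩).y = 0 := by
    simp only [h₁z, h₂z, Int.negOnePow_zero, Units.val_one, one_mul, neg_zero] at r₁
    linarith [r₁.2.1]
  exact ⟨_, _, _, _, _, _, Model.ext rfl h₁y h₁z, Model.ext rfl rfl h₂z, rfl⟩

theorem bijective_iff (θ : Model →* Model) : Bijective θ ↔
    ∃ a b ε₁ ε₂ ε₃ : ℤ, (ε₁ = 1 ∨ ε₁ = -1) ∧ (ε₂ = 1 ∨ ε₂ = -1) ∧ (ε₃ = 1 ∨ ε₃ = -1) ∧
      θ ⟨1, 0, 0⟩ = ⟨ε₁, 0, 0⟩ ∧ θ ⟨0, 1, 0⟩ = ⟨a, ε₂, 0⟩ ∧ θ ⟨0, 0, 1⟩ = ⟨0, 2 * b, ε₃⟩ := by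
  constructor
  · intro hθ
    obtain ⟨p, s, t, c, d, f, h₁, h₂, h₃⟩ := exists_map_gens_eq θ
    obtain ⟨hp, ht, hf⟩ := (bijective_iff_isUnit_of_map θ h₁ h₂ h₃).mp hθ
    have r₂ := congrArg Model.x (commute_gen₃_gen₁.map θ).eq
    have r₃ := congrArg Model.x (semiconjBy_gen₃_gen₂.map θ).eq
    simp only [map_inv, h₁, h₂, h₃, mul_x, inv_x, inv_y, Int.negOnePow_zero,
      Units.val_one, one_mul, Int.negOnePow_neg] at r₂ r₃
    have hd : d.negOnePow = 1 := by
      have hdp : (d.negOnePow : ℤ) * p = p := by linarith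
      exact Units.val_eq_one.mp ((mul_eq_right₀ hp.ne_zero).mp hdp)
    rw [Int.isUnit_iff] at hp ht hf
    have ht' : t.negOnePow = -1 := by rcases ht with rfl | rfl <;> simp
    have hc : c = 0 := by
      simp only [hd, ht', Units.val_one, Units.val_neg] at r₃
      linarith
    obtain ⟨b, rfl⟩ := (Int.negOnePow_eq_one_iff d).mp hd
    exact ⟨s, b, p, t, f, hp, ht, hf, h₁, h₂, by rw [h₃, hc, two_mul]⟩
  · rintro ⟨a, b, ε₁, ε₂, ε₃, hε₁, hε₂, hε₃, h₁, h₂, h₃⟩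
    exact (bijective_iff_isUnit_of_map θ h₁ h₂ h₃).mpr
      ⟨Int.isUnit_iff.mpr hε₁, Int.isUnit_iff.mpr hε₂, Int.isUnit_iff.mpr hε₃⟩

end Model

local notation "G₃" => PresentedGroup polyZRelsA0
local notation "g₁" => (PresentedGroup.of 0 : G₃)
local notation "g₂" => (PresentedGroup.of 1 : G₃)
local notation "g₃" => (PresentedGroup.of 2 : G₃)

lemma semiconjBy_g₂_g₁ : SemiconjBy g₂ g₁ g₁⁻¹ := by
  have h := PresentedGroup.one_of_mem (rels := polyZRelsA0) (Set.mem_insert _ _)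
  simp only [map_mul, map_inv] at h
  exact mul_inv_eq_iff_eq_mul.mp (mul_eq_one_iff_eq_inv.mp h)

lemma commute_g₃_g₁ : Commute g₃ g₁ := by
  have h := PresentedGroup.one_of_mem (rels := polyZRelsA0)
    (Set.mem_insert_of_mem _ (Set.mem_insert _ _))
  simp only [map_mul, map_inv] at h
  exact commutatorElement_eq_one_iff_commute.mp h

lemma semiconjBy_g₃_g₂ : SemiconjBy g₃ g₂ g₂⁻¹ := by
  have h := PresentedGroup.one_of_mem (rels := polyZRelsA0)
    (Set.mem_insert_of_mem _ (Set.mem_insert_of_mem _ rfl))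
  simp only [map_mul, map_inv] at h
  exact mul_inv_eq_iff_eq_mul.mp (mul_eq_one_iff_eq_inv.mp h)

lemma normalForm_mul_normalForm (x₁ y₁ z₁ x₂ y₂ z₂ : ℤ) :
    g₁ ^ x₁ * g₂ ^ y₁ * g₃ ^ z₁ * (g₁ ^ x₂ * g₂ ^ y₂ * g₃ ^ z₂) =
      g₁ ^ (x₁ + y₁.negOnePow * x₂) * g₂ ^ (y₁ + z₁.negOnePow * y₂) * g₃ ^ (z₁ + z₂) := by
  calc _ = g₁ ^ x₁ * g₂ ^ y₁ * (g₃ ^ z₁ * g₁ ^ x₂) * g₂ ^ y₂ * g₃ ^ z₂ := by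
          simp only [mul_assoc]
    _ = g₁ ^ x₁ * (g₂ ^ y₁ * g₁ ^ x₂) * (g₃ ^ z₁ * g₂ ^ y₂) * g₃ ^ z₂ := by
          rw [(commute_g₃_g₁.zpow_zpow z₁ x₂).eq]; simp only [mul_assoc]
    _ = _ := by
          rw [(semiconjBy_g₂_g₁.zpow_zpow_of_inv y₁ x₂).eq,
            (semiconjBy_g₃_g₂.zpow_zpow_of_inv z₁ y₂).eq, zpow_add, zpow_add, zpow_add]
          simp only [mul_assoc]

def toModel : G₃ →* Model :=
  PresentedGroup.toGroup (f := ![⟨1, 0, 0⟩, ⟨0, 1, 0⟩, ⟨0, 0, 1⟩]) fun r hr => by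
    simp only [polyZRelsA0, Set.mem_insert_iff, Set.mem_singleton_iff] at hr
    rcases hr with rfl | rfl | rfl <;> ext <;> simp

def ofModel : Model →* G₃ :=
  MonoidHom.mk' (fun v => g₁ ^ v.x * g₂ ^ v.y * g₃ ^ v.z) fun u v =>
    (normalForm_mul_normalForm u.x u.y u.z v.x v.y v.z).symm

def equivModel : G₃ ≃* Model :=
  toModel.toMulEquiv ofModel
    (PresentedGroup.ext fun i => by fin_cases i <;> simp [toModel, ofModel])
    (MonoidHom.ext fun v => by simp [toModel, ofModel, Model.zpow_mul_zpow_mul_zpow])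

lemma equivModel_symm_mk (x y z : ℤ) :
    equivModel.symm ⟨x, y, z⟩ = g₁ ^ x * g₂ ^ y * g₃ ^ z := rfl

end PolyZA0

open PolyZA0

/-- In `G₃ = ⟨g₁, g₂, g₃ ∣ g₂g₁ = g₁⁻¹g₂, g₃g₁ = g₁g₃, g₃g₂ = g₂⁻¹g₃⟩`, a
group homomorphism `ψ : G₃ →* G₃` is an automorphism (i.e. bijective) if and
only if there exist `a, b ∈ ℤ` and `ε₁, ε₂, ε₃ ∈ {1, -1}` such that
`ψ g₁ = g₁^{ε₁}`, `ψ g₂ = g₁^a g₂^{ε₂}`, and `ψ g₃ = g₂^{2b} g₃^{ε₃}`. -/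
theorem polyZ_a0_aut_characterization
    (ψ : PresentedGroup polyZRelsA0 →* PresentedGroup polyZRelsA0) :
    letI G₃ := PresentedGroup polyZRelsA0
    letI g₁ : G₃ := PresentedGroup.of 0
    letI g₂ : G₃ := PresentedGroup.of 1
    letI g₃ : G₃ := PresentedGroup.of 2
    Function.Bijective ψ ↔
      ∃ (a b ε₁ ε₂ ε₃ : ℤ), (ε₁ = 1 ∨ ε₁ = -1) ∧ (ε₂ = 1 ∨ ε₂ = -1) ∧
        (ε₃ = 1 ∨ ε₃ = -1) ∧
        ψ g₁ = g₁ ^ ε₁ ∧ ψ g₂ = g₁ ^ a * g₂ ^ ε₂ ∧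
        ψ g₃ = g₂ ^ (2 * b) * g₃ ^ ε₃ := by
  let θ : Model →* Model := equivModel.toMonoidHom.comp (ψ.comp equivModel.symm.toMonoidHom)
  have hθ : Bijective ψ ↔ Bijective θ := by
    simp [θ]
  rw [hθ, Model.bijective_iff]
  simp only [θ, MonoidHom.comp_apply, MulEquiv.coe_toMonoidHom, ← MulEquiv.eq_symm_apply,
    equivModel_symm_mk, zpow_zero, zpow_one, mul_one, one_mul]
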